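/- Define the formal generating function 𝒫(y,x;n) = Σ_{ν=0}^{n} (y^ν/ν!) 𝒫_ν(x;n) plus higher terms via the recursion extended for all ν ≥ 0. Then ∂𝒫/∂y(y,x;n) as a formal power series in y satisfies φ(x + y φ(x)) ∂𝒫/∂y = φ(x)[ψ(x + y φ(x)) + (n-1) φ'(x + y φ(x))] 𝒫(y,x;n), i.e., equivalently (1 + y φ'(x) + (1/2) y² φ'' φ(x)) ∂𝒫/∂y = [𝒫_1(x;n) + y φ(x) 𝒫_1'(x;n)] 𝒫(y,x;n). -/

import Mathlib

/-
For `ψ'' = 0` and `φ''' = 0`, differentiating the recursion shows by induction that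
`𝒫_{m+1}' = (m+1) (𝒫_1' - (m/2) φ'') 𝒫_m`: a single lowering step. Feeding this back into the
recursion for `𝒫_{m+2}` gives the three-term recurrence
`𝒫_{m+2} + (m+1) φ' 𝒫_{m+1} + (m+1) m (½ φ'' φ) 𝒫_m = 𝒫_1 𝒫_{m+1} + (m+1) φ 𝒫_1' 𝒫_m`,
which is `(m+1)!` times the coefficient of `y^{m+1}` in the claimed identity.
-/

open Polynomial

noncomputable def compP (φ ψ : Polynomial ℝ) (n : ℕ) : ℕ → Polynomial ℝ
  | 0 => 1
  | ν + 1 => φ * Polynomial.derivative (compP φ ψ n ν)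
      + (ψ + Polynomial.C ((n : ℝ) - ν - 1) * Polynomial.derivative φ) * compP φ ψ n ν

/-- The generating function `𝒫(y,x;n) = Σ_ν y^ν 𝒫_ν(x;n)/ν!` as a formal power
series in `y` with polynomial coefficients in `x`. -/
noncomputable def genF (φ ψ : Polynomial ℝ) (n : ℕ) : PowerSeries (Polynomial ℝ) :=
  PowerSeries.mk fun ν => (1 / ((Nat.factorial ν : ℝ))) • compP φ ψ n ν

/-- Formal derivative `∂/∂y` of a power series in `y`. -/
noncomputable def psDeriv (f : PowerSeries (Polynomial ℝ)) : PowerSeries (Polynomial ℝ) :=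
  PowerSeries.mk fun ν => ((ν : ℝ) + 1) • PowerSeries.coeff (ν + 1) f

namespace compP

variable (φ ψ : ℝ[X]) (n : ℕ)

theorem succ_eq (ν : ℕ) :
    compP φ ψ n (ν + 1) = φ * derivative (compP φ ψ n ν)
      + (ψ + ((n : ℝ[X]) - ν - 1) * derivative φ) * compP φ ψ n ν := by
  simp [compP]

theorem one_eq : compP φ ψ n 1 = ψ + ((n : ℝ[X]) - 1) * derivative φ := by
  simp [compP]

variable {φ ψ}

theorem derivative_succ (hψ : derivative (derivative ψ) = 0)
    (hφ : derivative (derivative (derivative φ)) = 0) (m : ℕ) :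
    derivative (compP φ ψ n (m + 1)) = ((m : ℝ[X]) + 1) *
      (derivative (compP φ ψ n 1) - m * (C (1 / 2 : ℝ) * derivative (derivative φ)))
        * compP φ ψ n m := by
  induction m with
  | zero => simp [compP]
  | succ k ih =>
    set c := ((k : ℝ[X]) + 1) *
        (derivative (compP φ ψ n 1) - (k : ℝ[X]) * (C (1 / 2 : ℝ) * derivative (derivative φ)))
    have hc : derivative c = 0 := by simp [c, one_eq, hψ, hφ]
    have hP1 : derivative (compP φ ψ n 1)
        = derivative ψ + ((n : ℝ[X]) - 1) * derivative (derivative φ) := by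
      simp [one_eq]
    have hhalf : C (1 / 2 : ℝ) * 2 = 1 := by rw [← C_ofNat, ← C_mul]; norm_num
    -- As `c` is constant, differentiating `φ * (c * P_k) + (ψ + (n - k - 2) φ') * P_{k+1}` gives
    -- `c` times the recursion for `P_{k+1}`, plus a multiple of `P_{k+1}`.
    rw [succ_eq φ ψ n (k + 1)]
    simp only [derivative_mul, derivative_add, derivative_sub, derivative_natCast, derivative_one,
      ih, hc, add_zero, sub_zero, zero_mul, zero_add, Nat.cast_add, Nat.cast_one]
    linear_combination (-c) * succ_eq φ ψ n k - compP φ ψ n (k + 1) * hP1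
      + ((k : ℝ[X]) + 1) * derivative (derivative φ) * compP φ ψ n (k + 1) * hhalf

theorem three_term_recurrence (hψ : derivative (derivative ψ) = 0)
    (hφ : derivative (derivative (derivative φ)) = 0) (m : ℕ) :
    compP φ ψ n (m + 2) + ((m : ℝ[X]) + 1) * derivative φ * compP φ ψ n (m + 1)
        + ((m : ℝ[X]) + 1) * m * (C (1 / 2 : ℝ) * derivative (derivative φ) * φ) * compP φ ψ n m
      = compP φ ψ n 1 * compP φ ψ n (m + 1)
        + ((m : ℝ[X]) + 1) * (φ * derivative (compP φ ψ n 1)) * compP φ ψ n m := by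
  rw [succ_eq φ ψ n (m + 1), derivative_succ n hψ hφ, one_eq φ ψ n]
  push_cast
  ring

end compP

theorem coeff_genF (φ ψ : ℝ[X]) (n m : ℕ) :
    PowerSeries.coeff m (genF φ ψ n) = ((m.factorial : ℝ)⁻¹) • compP φ ψ n m := by
  simp [genF]

theorem coeff_psDeriv (f : PowerSeries ℝ[X]) (m : ℕ) :
    PowerSeries.coeff m (psDeriv f) = ((m : ℝ) + 1) • PowerSeries.coeff (m + 1) f := by
  simp [psDeriv]

theorem coeff_psDeriv_genF (φ ψ : ℝ[X]) (n m : ℕ) :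
    PowerSeries.coeff m (psDeriv (genF φ ψ n)) = ((m.factorial : ℝ)⁻¹) • compP φ ψ n (m + 1) := by
  rw [coeff_psDeriv, coeff_genF, smul_smul, Nat.factorial_succ]
  push_cast
  field_simp

theorem coeff_X_mul_psDeriv_genF (φ ψ : ℝ[X]) (n m : ℕ) :
    PowerSeries.coeff m (PowerSeries.X * psDeriv (genF φ ψ n))
      = ((m : ℝ) * (m.factorial : ℝ)⁻¹) • compP φ ψ n m := by
  cases m with
  | zero => simp
  | succ k =>
    rw [PowerSeries.coeff_succ_X_mul, coeff_psDeriv_genF, Nat.factorial_succ]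
    push_cast
    field_simp

/-- the generating function satisfies the formal PDE
`(1 + y φ'(x) + ½ y² φ'' φ(x)) ∂𝒫/∂y = (𝒫₁(x;n) + y φ(x) 𝒫₁'(x;n)) 𝒫(y,x;n)`. -/
theorem stmt_11 (φ ψ : Polynomial ℝ) (hφ : φ.natDegree ≤ 2) (hψ : ψ.degree = 1) (n : ℕ) :
    (1 + PowerSeries.X * PowerSeries.C (Polynomial.derivative φ)
        + PowerSeries.X ^ 2
            * PowerSeries.C (Polynomial.C (1 / 2 : ℝ) * Polynomial.derivative (Polynomial.derivative φ) * φ))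
        * psDeriv (genF φ ψ n)
      = (PowerSeries.C (compP φ ψ n 1)
          + PowerSeries.X * PowerSeries.C (φ * Polynomial.derivative (compP φ ψ n 1)))
        * genF φ ψ n := by
  have hψ2 : derivative (derivative ψ) = 0 :=
    iterate_derivative_eq_zero (x := 2) (by rw [natDegree_eq_of_degree_eq_some hψ]; norm_num)
  have hφ3 : derivative (derivative (derivative φ)) = 0 :=
    iterate_derivative_eq_zero (x := 3) (by omega)
  have expand (a b : ℝ[X]) (D : PowerSeries ℝ[X]) :
      (1 + PowerSeries.X * PowerSeries.C a + PowerSeries.X ^ 2 * PowerSeries.C b) * D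
        = D + PowerSeries.X * (PowerSeries.C a * D)
          + PowerSeries.X * (PowerSeries.C b * (PowerSeries.X * D)) := by ring
  rw [expand, add_mul _ _ (genF φ ψ n), mul_assoc PowerSeries.X]
  refine PowerSeries.ext fun ν => ?_
  cases ν with
  | zero =>
    simp only [map_add, PowerSeries.coeff_zero_X_mul, PowerSeries.coeff_C_mul, coeff_psDeriv_genF,
      coeff_genF]
    simp [compP]
  | succ m =>
    simp only [map_add, PowerSeries.coeff_succ_X_mul, PowerSeries.coeff_C_mul, coeff_psDeriv_genF,
      coeff_genF, coeff_X_mul_psDeriv_genF]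
    have hfac : (m.factorial : ℝ)⁻¹ = (m + 1) * ((m + 1).factorial : ℝ)⁻¹ := by
      rw [Nat.factorial_succ]; push_cast; field_simp
    rw [hfac]
    simp only [smul_eq_C_mul, map_mul, map_natCast, map_add, map_one]
    linear_combination C (((m + 1).factorial : ℝ)⁻¹) * compP.three_term_recurrence n hψ2 hφ3 m
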